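/- Let G be a graph formed by taking vertex-disjoint copies of K_5, K_5 − e, and K_4, and adding a perfect matching on the set of degree-3 vertices such that matched vertices lie in different components. Then G is 4-regular and for every vertex v, the induced subgraph on the neighborhood of v contains a triangle; hence the complement of the neighborhood of v has no matching of size 2 and no vertex of G is DP-removable. -/

import Mathlib

/-!
Inside its part, a vertex `v` always lies in a clique on four vertices (the whole part for `K₅`
and `K₄`; for `K₅ − e`, the part minus the endpoint of the missing edge other than `v`). Hence
`v` has three or four neighbours in its part, three of which form a triangle. The matching adds
an outside neighbour exactly when there are only three, so `v` has degree `4` and its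
neighbourhood is a four-vertex set containing a triangle. Two disjoint non-edges would cover that
set, and two vertices of the triangle would then lie in the same non-edge.
-/

open Finset

namespace SimpleGraph

variable {V : Type*} {G : SimpleGraph V}

theorem IsClique.exists_isNClique_three_subset {s : Finset V} (hs : G.IsClique (s : Set V))
    (hcard : 3 ≤ #s) : ∃ t ⊆ s, G.IsNClique 3 t := by
  obtain ⟨t, hts, ht⟩ := exists_subset_card_eq hcard
  exact ⟨t, hts, hs.subset (coe_subset.2 hts), ht⟩

variable [DecidableEq V]

theorem adj_or_adj_of_isNClique_three_subset {t : Finset V} (ht : G.IsNClique 3 t)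
    {u₁ w₁ u₂ w₂ : V} (hsub : t ⊆ {u₁, w₁, u₂, w₂}) (h₁ : u₁ ≠ w₁) (h₂ : u₂ ≠ w₂) :
    G.Adj u₁ w₁ ∨ G.Adj u₂ w₂ := by
  have hpair : ∀ {x y : V}, x ≠ y → 2 ≤ #(t ∩ {x, y}) → G.Adj x y := fun {x y} hxy h => by
    have hxyt : {x, y} ⊆ t := by
      rw [← eq_of_subset_of_card_le inter_subset_right ((card_pair hxy).trans_le h)]
      exact inter_subset_left
    exact ht.isClique (hxyt (by simp)) (hxyt (by simp)) hxy
  have hcover : #t ≤ #(t ∩ {u₁, w₁}) + #(t ∩ {u₂, w₂}) := by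
    calc #t = #(t ∩ ({u₁, w₁} ∪ {u₂, w₂})) := by
          rw [inter_eq_left.2 (hsub.trans_eq (by ext; simp; tauto))]
      _ ≤ _ := by rw [inter_union_distrib_left]; exact card_union_le _ _
  rw [ht.card_eq] at hcover
  by_cases hfst : 2 ≤ #(t ∩ {u₁, w₁})
  · exact Or.inl (hpair h₁ hfst)
  · exact Or.inr (hpair h₂ (by omega))

theorem isClique_erase_of_adj_of_ne {A : Finset V} {e : Sym2 V} {x : V} (hx : x ∈ e)
    (hadj : ∀ u ∈ A, ∀ v ∈ A, u ≠ v → s(u, v) ≠ e → G.Adj u v) :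
    G.IsClique (A.erase x : Set V) := by
  intro u hu v hv huv
  simp only [coe_erase, Set.mem_sdiff, mem_coe, Set.mem_singleton_iff] at hu hv
  refine hadj u hu.1 v hv.1 huv fun he => ?_
  rcases Sym2.mem_iff.1 (he ▸ hx) with rfl | rfl
  exacts [hu.2 rfl, hv.2 rfl]

theorem filter_adj_subset_erase (A : Finset V) (v : V) [DecidablePred (G.Adj v)] :
    A.filter (G.Adj v) ⊆ A.erase v := fun _ hu =>
  mem_erase.2 ⟨(mem_filter.1 hu).2.ne', (mem_filter.1 hu).1⟩

theorem erase_subset_filter_adj_of_isClique {A C : Finset V} {v : V}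
    [DecidablePred (G.Adj v)] (hCA : C ⊆ A) (hvC : v ∈ C) (hC : G.IsClique (C : Set V)) :
    C.erase v ⊆ A.filter (G.Adj v) := fun _ hu =>
  mem_filter.2 ⟨hCA (mem_of_mem_erase hu), hC hvC (mem_of_mem_erase hu) (ne_of_mem_erase hu).symm⟩

theorem exists_isClique_card_four_of_mem {A : Finset V} {v : V} (hv : v ∈ A)
    (hA : (#A = 5 ∧ ∀ x ∈ A, ∀ y ∈ A, x ≠ y → G.Adj x y) ∨
      (#A = 5 ∧ ∃ a ∈ A, ∃ b ∈ A, a ≠ b ∧ ¬ G.Adj a b ∧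
        ∀ x ∈ A, ∀ y ∈ A, x ≠ y → s(x, y) ≠ s(a, b) → G.Adj x y) ∨
      (#A = 4 ∧ ∀ x ∈ A, ∀ y ∈ A, x ≠ y → G.Adj x y)) :
    #A ≤ 5 ∧ ∃ C ⊆ A, v ∈ C ∧ 4 ≤ #C ∧ G.IsClique (C : Set V) := by
  rcases hA with ⟨hcard, hA⟩ | ⟨hcard, a, ha, b, hb, hab, -, hadj⟩ | ⟨hcard, hA⟩
  · exact ⟨hcard.le, A, Subset.rfl, hv, by omega, hA⟩
  · refine ⟨hcard.le, ?_⟩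
    by_cases hvb : v = b
    · subst hvb
      refine ⟨A.erase a, erase_subset a A, mem_erase.2 ⟨hab.symm, hv⟩, ?_,
        isClique_erase_of_adj_of_ne (Sym2.mem_mk_left a v) hadj⟩
      rw [card_erase_of_mem ha, hcard]
    · refine ⟨A.erase b, erase_subset b A, mem_erase.2 ⟨hvb, hv⟩, ?_,
        isClique_erase_of_adj_of_ne (Sym2.mem_mk_right a b) hadj⟩
      rw [card_erase_of_mem hb, hcard]
  · exact ⟨by omega, A, Subset.rfl, hv, hcard.ge, hA⟩

variable [Fintype V] [DecidableRel G.Adj]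

theorem degree_eq_four_of_card_filter_adj {A : Finset V} {v : V}
    (hout : ∀ w, G.Adj v w → w ∉ A →
      #(A.filter (G.Adj v)) = 3 ∧ ∀ w', G.Adj v w' → w' ∉ A → w' = w)
    (hin : #(A.filter (G.Adj v)) = 3 → ∃ w, G.Adj v w ∧ w ∉ A)
    (h₃ : 3 ≤ #(A.filter (G.Adj v))) (h₄ : #(A.filter (G.Adj v)) ≤ 4) :
    G.degree v = 4 := by
  set O := (G.neighborFinset v).filter (· ∉ A)
  have hsplit : #(A.filter (G.Adj v)) + #O = G.degree v := by
    rw [← card_neighborFinset_eq_degree,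
      ← card_filter_add_card_filter_not (s := G.neighborFinset v) (· ∈ A)]
    congr 2
    ext u
    simp [and_comm]
  have hO : #O ≤ 1 := card_le_one.2 fun w hw w' hw' => by
    simp only [O, mem_filter, mem_neighborFinset] at hw hw'
    exact ((hout w hw.1 hw.2).2 w' hw'.1 hw'.2).symm
  rcases O.eq_empty_or_nonempty with hempty | ⟨w, hw⟩
  · have h4 : #(A.filter (G.Adj v)) ≠ 3 := fun h3 => by
      obtain ⟨w, hw, hwA⟩ := hin h3
      exact eq_empty_iff_forall_notMem.1 hempty w (by simp [O, hw, hwA])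
    rw [hempty, card_empty] at hsplit
    omega
  · simp only [O, mem_filter, mem_neighborFinset] at hw
    have h3 := (hout w hw.1 hw.2).1
    have := card_pos.2 ⟨w, show w ∈ O by simp [O, hw]⟩
    omega

theorem degree_eq_four_and_exists_triangle {A C : Finset V} {v : V}
    (hA : #A ≤ 5) (hCA : C ⊆ A) (hvC : v ∈ C) (hC : 4 ≤ #C) (hCc : G.IsClique (C : Set V))
    (hout : ∀ w, G.Adj v w → w ∉ A →
      #(A.filter (G.Adj v)) = 3 ∧ ∀ w', G.Adj v w' → w' ∉ A → w' = w)
    (hin : #(A.filter (G.Adj v)) = 3 → ∃ w, G.Adj v w ∧ w ∉ A) :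
    G.degree v = 4 ∧ ∃ t ⊆ G.neighborFinset v, G.IsNClique 3 t := by
  have hlower := erase_subset_filter_adj_of_isClique hCA hvC hCc
  have hC' : 3 ≤ #(C.erase v) := by rw [card_erase_of_mem hvC]; omega
  have hupper := card_le_card (filter_adj_subset_erase (G := G) A v)
  rw [card_erase_of_mem (hCA hvC)] at hupper
  refine ⟨degree_eq_four_of_card_filter_adj hout hin (hC'.trans (card_le_card hlower))
    (by omega), ?_⟩
  have hCv : G.IsClique (C.erase v : Set V) := hCc.subset (coe_subset.2 (erase_subset v C))
  obtain ⟨t, htC, ht⟩ := hCv.exists_isNClique_three_subset hC'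
  exact ⟨t, fun u hu => by simpa using (mem_filter.1 (hlower (htC hu))).2, ht⟩

end SimpleGraph

open SimpleGraph

/-- Let `G` be obtained from vertex-disjoint copies of `K₅`, `K₅ − e` and `K₄`
(the parts of the partition `P`) by adding a perfect matching on the degree-3 vertices,
matched vertices lying in different parts.  Then `G` is 4-regular and the induced
neighborhood of every vertex contains a triangle; hence the complement of every
induced neighborhood has no matching of size 2 and no vertex of `G` is DP-removable. -/
theorem k5_k5e_k4_construction_irreducible {V : Type*} [Fintype V] [DecidableEq V]
    (G : SimpleGraph V) [DecidableRel G.Adj]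
    (P : Finset (Finset V))
    (hcover : ∀ v : V, ∃! A, A ∈ P ∧ v ∈ A)
    (hparts : ∀ A ∈ P,
      (A.card = 5 ∧ ∀ u ∈ A, ∀ v ∈ A, u ≠ v → G.Adj u v) ∨
      (A.card = 5 ∧ ∃ a ∈ A, ∃ b ∈ A, a ≠ b ∧ ¬ G.Adj a b ∧
        ∀ u ∈ A, ∀ v ∈ A, u ≠ v → s(u, v) ≠ s(a, b) → G.Adj u v) ∨
      (A.card = 4 ∧ ∀ u ∈ A, ∀ v ∈ A, u ≠ v → G.Adj u v))
    (hmatch : ∀ A ∈ P, ∀ v ∈ A, ∀ w, G.Adj v w → w ∉ A →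
      (A.filter (G.Adj v)).card = 3 ∧ ∀ w', G.Adj v w' → w' ∉ A → w' = w)
    (hdeg3 : ∀ A ∈ P, ∀ v ∈ A, (A.filter (G.Adj v)).card = 3 →
      ∃ w, G.Adj v w ∧ w ∉ A) :
    (∀ v : V, (G.neighborSet v).ncard = 4) ∧
    (∀ v : V, ∃ a b c : V, G.Adj v a ∧ G.Adj v b ∧ G.Adj v c ∧
      G.Adj a b ∧ G.Adj a c ∧ G.Adj b c) ∧
    (∀ v : V, ¬ ∃ u₁ w₁ u₂ w₂ : V,
      G.Adj v u₁ ∧ G.Adj v w₁ ∧ G.Adj v u₂ ∧ G.Adj v w₂ ∧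
      u₁ ≠ w₁ ∧ u₂ ≠ w₂ ∧ u₁ ≠ u₂ ∧ u₁ ≠ w₂ ∧ w₁ ≠ u₂ ∧ w₁ ≠ w₂ ∧
      ¬ G.Adj u₁ w₁ ∧ ¬ G.Adj u₂ w₂) := by
  have key (v : V) : G.degree v = 4 ∧ ∃ t ⊆ G.neighborFinset v, G.IsNClique 3 t := by
    obtain ⟨A, ⟨hAP, hvA⟩, -⟩ := hcover v
    obtain ⟨hA, C, hCA, hvC, hC, hCc⟩ := exists_isClique_card_four_of_mem hvA (hparts A hAP)
    exact degree_eq_four_and_exists_triangle hA hCA hvC hC hCc (hmatch A hAP v hvA)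
      (hdeg3 A hAP v hvA)
  refine ⟨fun v => ?_, fun v => ?_, fun v => ?_⟩
  · rw [← coe_neighborFinset, Set.ncard_coe_finset]
    exact (key v).1
  · obtain ⟨t, hts, ht⟩ := (key v).2
    obtain ⟨a, b, c, hab, hac, hbc, rfl⟩ := is3Clique_iff.1 ht
    simp only [insert_subset_iff, singleton_subset_iff, mem_neighborFinset] at hts
    exact ⟨a, b, c, hts.1, hts.2.1, hts.2.2, hab, hac, hbc⟩
  · rintro ⟨u₁, w₁, u₂, w₂, h₁, h₂, h₃, h₄, d₁, d₂, d₃, d₄, d₅, d₆, n₁, n₂⟩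
    obtain ⟨hdeg, t, hts, ht⟩ := key v
    have hnbhd : ({u₁, w₁, u₂, w₂} : Finset V) = G.neighborFinset v :=
      eq_of_subset_of_card_le (by simp [insert_subset_iff, h₁, h₂, h₃, h₄])
        (by rw [card_neighborFinset_eq_degree, hdeg,
          card_eq_four.2 ⟨u₁, w₁, u₂, w₂, d₁, d₃, d₄, d₅, d₆, d₂, rfl⟩])
    rcases adj_or_adj_of_isNClique_three_subset ht (hnbhd ▸ hts) d₁ d₂ with h | h
    exacts [n₁ h, n₂ h]
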